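/- arXiv:2202.13718 — 2 statements merged into one kernel-verified Lean document; each statement's English description precedes it below -/
import Mathlib

section
/- Fix a set U ⊆ [n] and an integer k ≥ 1, and suppose l is (M,m)-(restricted smooth, restricted strongly concave) on the sparse subdomain Ω_{|U|+k}, with 0 < m ≤ M. Then for all sets L ⊆ U and S ⊆ [n] with L ∩ S = ∅ and |S| ≤ k (with the relevant maximizers assumed to exist), it holds that Σ_{j∈S} (f(L ∪ {j}) − f(L)) ≥ (m/M) · (f(L ∪ S) − f(L)); that is, the submodularity ratio γ_{U,k} of f is at least m/M. -/
open scoped BigOperators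

noncomputable section

abbrev Euc (n : ℕ) := EuclideanSpace ℝ (Fin n)

/-- Number of nonzero coordinates (the ℓ₀ "norm"). -/
def norm0 {n : ℕ} (x : Euc n) : ℕ := (Finset.univ.filter fun i => x i ≠ 0).card

/-- `l` is (M,m)-(restricted smooth, restricted strongly concave) on the sparse
subdomain `Ω_r`, with gradient `g`. -/
def IsRSCSM {n : ℕ} (l : Euc n → ℝ) (g : Euc n → Euc n) (M m : ℝ) (r : ℕ) : Prop :=
  ∀ x y : Euc n, norm0 x ≤ r → norm0 y ≤ r → norm0 (x - y) ≤ r →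
    (l y - l x - (inner ℝ (g x) (y - x) : ℝ) ≤ -(m / 2) * ‖y - x‖ ^ 2) ∧
    (-(M / 2) * ‖y - x‖ ^ 2 ≤ l y - l x - (inner ℝ (g x) (y - x) : ℝ))

/-- `x` is supported in the index set `S`. -/
def SuppIn {n : ℕ} (S : Finset (Fin n)) (x : Euc n) : Prop := ∀ i, i ∉ S → x i = 0

/-- The support selection function `f(S) = l(β^(S)) - l(0)`. -/
def fsel {n : ℕ} (l : Euc n → ℝ) (B : Finset (Fin n) → Euc n) (S : Finset (Fin n)) : ℝ :=
  l (B S) - l 0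

/-!
Write `x = β^(L)`. As `x` maximizes `l` over the vectors supported in `L`, the gradient `∇l(x)`
vanishes on `L`. Restricted strong concavity, maximized coordinate by coordinate, then bounds
`f(L ∪ S) - f(L)` above by `∑_{j ∈ S} ∇l(x)_j² / (2m)`, while restricted smoothness along the
step `(∇l(x)_j / M) e_j` bounds each `f(L ∪ {j}) - f(L)` below by `∇l(x)_j² / (2M)`.
-/

section

variable {n : ℕ}

namespace SuppIn

variable {S T : Finset (Fin n)} {x y : Euc n}

lemma mono (hx : SuppIn S x) (hST : S ⊆ T) : SuppIn T x :=
  fun i hi => hx i fun hiS => hi (hST hiS)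

lemma add (hx : SuppIn S x) (hy : SuppIn S y) : SuppIn S (x + y) := fun i hi => by
  simp [hx i hi, hy i hi]

lemma sub (hx : SuppIn S x) (hy : SuppIn S y) : SuppIn S (x - y) := fun i hi => by
  simp [hx i hi, hy i hi]

lemma smul (hx : SuppIn S x) (a : ℝ) : SuppIn S (a • x) := fun i hi => by
  simp [hx i hi]

end SuppIn

lemma suppIn_single (i : Fin n) (a : ℝ) : SuppIn {i} (EuclideanSpace.single i a) :=
  fun j hj => by simp [Finset.mem_singleton.not.1 hj]

lemma norm0_le_card_of_suppIn {S : Finset (Fin n)} {x : Euc n} (hx : SuppIn S x) :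
    norm0 x ≤ S.card :=
  Finset.card_le_card fun i hi => by
    by_contra hiS
    exact (Finset.mem_filter.1 hi).2 (hx i hiS)

lemma HasGradientAt.hasDerivAt_comp_add_smul {E : Type*} [NormedAddCommGroup E]
    [InnerProductSpace ℝ E] [CompleteSpace E] {l : E → ℝ} {G x : E} (hl : HasGradientAt l G x)
    (v : E) : HasDerivAt (fun t : ℝ => l (x + t • v)) (inner ℝ G v) 0 := by
  have hline : HasDerivAt (fun t : ℝ => x + t • v) v 0 := by
    simpa using ((hasDerivAt_id (0 : ℝ)).smul_const v).const_add x
  have hl' : HasFDerivAt l (InnerProductSpace.toDual ℝ E G) (x + (0 : ℝ) • v) := by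
    simpa using hl.hasFDerivAt
  have h := hl'.comp_hasDerivAt 0 hline
  simp only [InnerProductSpace.toDual_apply_apply] at h
  exact h

lemma gradient_apply_eq_zero_of_isMaxOn {l : Euc n → ℝ} {G x : Euc n} {L : Finset (Fin n)}
    (hl : HasGradientAt l G x) (hx : SuppIn L x) (hmax : IsMaxOn l {y | SuppIn L y} x)
    {i : Fin n} (hi : i ∈ L) : G i = 0 := by
  have hei : SuppIn L (EuclideanSpace.single i 1) :=
    (suppIn_single i 1).mono (Finset.singleton_subset_iff.2 hi)
  have hline : IsLocalMax (fun t : ℝ => l (x + t • EuclideanSpace.single i 1)) 0 :=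
    Filter.Eventually.of_forall fun t => by simpa using hmax (hx.add (hei.smul t))
  simpa [EuclideanSpace.inner_single_right] using
    hline.hasDerivAt_eq_zero (hl.hasDerivAt_comp_add_smul _)

lemma mul_sub_half_mul_sq_le {m : ℝ} (hm : 0 < m) (a d : ℝ) :
    a * d - m / 2 * d ^ 2 ≤ a ^ 2 / (2 * m) := by
  rw [le_div_iff₀ (by positivity)]
  nlinarith [sq_nonneg (m * d - a)]

lemma real_inner_eq_sum (x y : Euc n) : inner ℝ x y = ∑ i, x i * y i := by
  simp [PiLp.inner_apply, mul_comm]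

namespace IsRSCSM

variable {l : Euc n → ℝ} {g : Euc n → Euc n} {M m : ℝ} {r : ℕ}

lemma of_suppIn (hl : IsRSCSM l g M m r) {T : Finset (Fin n)} (hT : T.card ≤ r) {x y : Euc n}
    (hx : SuppIn T x) (hy : SuppIn T y) :
    (l y - l x - inner ℝ (g x) (y - x) ≤ -(m / 2) * ‖y - x‖ ^ 2) ∧
    (-(M / 2) * ‖y - x‖ ^ 2 ≤ l y - l x - inner ℝ (g x) (y - x)) :=
  hl x y ((norm0_le_card_of_suppIn hx).trans hT) ((norm0_le_card_of_suppIn hy).trans hT)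
    ((norm0_le_card_of_suppIn (hx.sub hy)).trans hT)

lemma sq_div_le_sub_of_isMaxOn (hl : IsRSCSM l g M m r) (hM : 0 < M) {L : Finset (Fin n)}
    {x z : Euc n} (hx : SuppIn L x) {j : Fin n} (hr : (L ∪ {j}).card ≤ r)
    (hz : IsMaxOn l {y | SuppIn (L ∪ {j}) y} z) :
    (g x j) ^ 2 / (2 * M) ≤ l z - l x := by
  set a := g x j / M
  set y := x + a • EuclideanSpace.single j (1 : ℝ)
  have hy : SuppIn (L ∪ {j}) y :=
    (hx.mono Finset.subset_union_left).add
      (((suppIn_single j 1).mono Finset.subset_union_right).smul a)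
  have hyx : y - x = a • EuclideanSpace.single j (1 : ℝ) := add_sub_cancel_left x _
  have hsmooth := (hl.of_suppIn hr
    (hx.mono Finset.subset_union_left) hy).2
  have hinner : inner ℝ (g x) (y - x) = a * g x j := by
    simp [hyx, inner_smul_right, EuclideanSpace.inner_single_right]
  have hnorm : ‖y - x‖ ^ 2 = a ^ 2 := by
    simp [hyx, norm_smul]
  rw [hinner, hnorm] at hsmooth
  have hgain : a * g x j - M / 2 * a ^ 2 = (g x j) ^ 2 / (2 * M) := by
    simp only [a]
    field_simp
    ring
  have hyz : l y ≤ l z := hz hy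
  linarith

lemma sub_le_sum_sq_div (hl : IsRSCSM l g M m r) (hm : 0 < m) {L S : Finset (Fin n)}
    {x y : Euc n} (hx : SuppIn L x) (hy : SuppIn (L ∪ S) y) (hr : (L ∪ S).card ≤ r)
    (hgL : ∀ i ∈ L, g x i = 0) :
    l y - l x ≤ ∑ j ∈ S, (g x j) ^ 2 / (2 * m) := by
  have hxLS : SuppIn (L ∪ S) x := hx.mono Finset.subset_union_left
  have hconc := (hl.of_suppIn hr hxLS hy).1
  have hterm : ∀ i, g x i * (y - x) i - m / 2 * ((y - x) i) ^ 2 ≤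
      if i ∈ S then (g x i) ^ 2 / (2 * m) else 0 := by
    intro i
    split_ifs with hiS
    · exact mul_sub_half_mul_sq_le hm _ _
    · have hprod : g x i * (y - x) i = 0 := by
        by_cases hiL : i ∈ L
        · simp [hgL i hiL]
        · have hiLS : i ∉ L ∪ S := by simp [hiL, hiS]
          simp [hxLS i hiLS, hy i hiLS]
      nlinarith [sq_nonneg ((y - x) i)]
  calc l y - l x ≤ inner ℝ (g x) (y - x) - m / 2 * ‖y - x‖ ^ 2 := by linarith
    _ = ∑ i, (g x i * (y - x) i - m / 2 * ((y - x) i) ^ 2) := by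
      rw [real_inner_eq_sum, EuclideanSpace.real_norm_sq_eq, Finset.sum_sub_distrib,
        Finset.mul_sum]
    _ ≤ ∑ i, if i ∈ S then (g x i) ^ 2 / (2 * m) else 0 := Finset.sum_le_sum fun i _ => hterm i
    _ = ∑ j ∈ S, (g x j) ^ 2 / (2 * m) := by rw [Finset.sum_ite_mem, Finset.univ_inter]

end IsRSCSM

lemma fsel_sub_fsel (l : Euc n → ℝ) (B : Finset (Fin n) → Euc n) (S T : Finset (Fin n)) :
    fsel l B T - fsel l B S = l (B T) - l (B S) :=
  sub_sub_sub_cancel_right _ _ _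

end

theorem stmt3_general {n k : ℕ} (hk : 1 ≤ k) (U : Finset (Fin n))
    (l : Euc n → ℝ) (g : Euc n → Euc n) (M m : ℝ)
    (hm : 0 < m) (hmM : m ≤ M)
    (hgrad : ∀ x, HasGradientAt l (g x) x)
    (hl : IsRSCSM l g M m (U.card + k))
    (B : Finset (Fin n) → Euc n)
    (hBsupp : ∀ S, SuppIn S (B S))
    (hBmax : ∀ S x, SuppIn S x → l x ≤ l (B S))
    (L S : Finset (Fin n)) (hLU : L ⊆ U) (hS : S.card ≤ k) :
    ∑ j ∈ S, (fsel l B (L ∪ {j}) - fsel l B L)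
      ≥ (m / M) * (fsel l B (L ∪ S) - fsel l B L) := by
  have hM : 0 < M := hm.trans_le hmM
  have hBmaxOn : ∀ T, IsMaxOn l {y | SuppIn T y} (B T) := fun T y hy => hBmax T y hy
  have hgL : ∀ i ∈ L, g (B L) i = 0 := fun i hi =>
    gradient_apply_eq_zero_of_isMaxOn (hgrad _) (hBsupp L) (hBmaxOn L) hi
  have hLcard : L.card ≤ U.card := Finset.card_le_card hLU
  have hupper : fsel l B (L ∪ S) - fsel l B L ≤ ∑ j ∈ S, (g (B L) j) ^ 2 / (2 * m) := by
    rw [fsel_sub_fsel]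
    exact hl.sub_le_sum_sq_div hm (hBsupp L) (hBsupp _)
      ((Finset.card_union_le _ _).trans (by omega)) hgL
  have hlower : ∀ j ∈ S, (g (B L) j) ^ 2 / (2 * M) ≤ fsel l B (L ∪ {j}) - fsel l B L :=
    fun j _ => by
      rw [fsel_sub_fsel]
      exact hl.sq_div_le_sub_of_isMaxOn hM (hBsupp L)
        ((Finset.card_union_le _ _).trans (by simp; omega)) (hBmaxOn _)
  calc (m / M) * (fsel l B (L ∪ S) - fsel l B L)
      ≤ (m / M) * ∑ j ∈ S, (g (B L) j) ^ 2 / (2 * m) := by gcongr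
    _ = ∑ j ∈ S, (g (B L) j) ^ 2 / (2 * M) := by
      rw [Finset.mul_sum]
      refine Finset.sum_congr rfl fun j _ => ?_
      field_simp
    _ ≤ ∑ j ∈ S, (fsel l B (L ∪ {j}) - fsel l B L) := Finset.sum_le_sum hlower

theorem stmt3 {n k : ℕ} (hk : 1 ≤ k) (U : Finset (Fin n))
    (l : Euc n → ℝ) (g : Euc n → Euc n) (M m : ℝ)
    (hm : 0 < m) (hmM : m ≤ M)
    (hgrad : ∀ x, HasGradientAt l (g x) x)
    (hl : IsRSCSM l g M m (U.card + k))
    (B : Finset (Fin n) → Euc n)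
    (hB0 : B ∅ = 0)
    (hBsupp : ∀ S, SuppIn S (B S))
    (hBmax : ∀ S x, SuppIn S x → l x ≤ l (B S))
    (L S : Finset (Fin n)) (hLU : L ⊆ U) (hLS : L ∩ S = ∅) (hS : S.card ≤ k) :
    ∑ j ∈ S, (fsel l B (L ∪ {j}) - fsel l B L)
      ≥ (m / M) * (fsel l B (L ∪ S) - fsel l B L) :=
  stmt3_general hk U l g M m hm hmM hgrad hl B hBsupp hBmax L S hLU hS
end
end

section
/- Let l be (M,m)-(restricted smooth, restricted strongly concave) on the sparse subdomain Ω_{2k}, with 0 < m ≤ M. Let S ⊆ [n] with |S| < k (with the relevant maximizers assumed to exist), let Y ⊆ [n] be a finite nonempty set, and let t ≥ 0. Then the average marginal gain over Y satisfies (1/|Y|)·Σ_{a∈Y} f_S(a) ≥ (t/(2M·|Y|))·|{s ∈ Y : (∂_s l(β^(S)))² ≥ t}|; in particular, if a is drawn uniformly at random from Y, then E[f_S(a)] ≥ (t/(2M))·Pr[(∂_a l(β^(S)))² ≥ t]. -/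
open scoped BigOperators

noncomputable section

/-!
Adding the coordinate `a` to the support and moving along `e_a` by `c` gains, by restricted
smoothness, at least `c ∂ₐl(β^(S)) - (M/2) c²`; at `c = ∂ₐl(β^(S)) / M` this is
`(∂ₐl(β^(S)))² / (2M)`, so `f_S(a) ≥ (∂ₐl(β^(S)))² / (2M)` for every `a`.
Markov's inequality applied to these nonnegative bounds over `Y` gives the claim.
-/

namespace SuppIn

variable {n : ℕ} {S : Finset (Fin n)} {x : Euc n}

theorem norm0_le_card (h : SuppIn S x) : norm0 x ≤ S.card :=
  Finset.card_le_card fun i hi => by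
    by_contra hiS
    exact (Finset.mem_filter.mp hi).2 (h i hiS)

theorem single (a : Fin n) (c : ℝ) : SuppIn {a} (EuclideanSpace.single a c) := by
  intro i hi
  simp [Finset.mem_singleton.not.mp hi]

theorem add_single (h : SuppIn S x) (a : Fin n) (c : ℝ) :
    SuppIn (insert a S) (x + EuclideanSpace.single a c) := by
  intro i hi
  rw [Finset.mem_insert, not_or] at hi
  simp [h i hi.2, hi.1]

end SuppIn

namespace IsRSCSM

variable {n r : ℕ} {l : Euc n → ℝ} {g : Euc n → Euc n} {M m : ℝ}

theorem add_single_ge (hl : IsRSCSM l g M m r) {S : Finset (Fin n)} {x : Euc n}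
    (hx : SuppIn S x) (hS : S.card < r) (a : Fin n) (c : ℝ) :
    l x + c * g x a - M / 2 * c ^ 2 ≤ l (x + EuclideanSpace.single a c) := by
  set y := x + EuclideanSpace.single a c
  have hx_card : norm0 x ≤ r := hx.norm0_le_card.trans hS.le
  have hy_card : norm0 y ≤ r :=
    (hx.add_single a c).norm0_le_card.trans ((Finset.card_insert_le a S).trans hS)
  have hxy_card : norm0 (x - y) ≤ r := by
    have hxy : x - y = EuclideanSpace.single a (-c) := by simp [y, PiLp.single_neg]
    rw [hxy]
    exact (SuppIn.single a (-c)).norm0_le_card.trans (by simpa using Nat.one_le_of_lt hS)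
  have hsmooth := (hl x y hx_card hy_card hxy_card).2
  have hyx : y - x = EuclideanSpace.single a c := by simp [y]
  rw [hyx, EuclideanSpace.inner_single_right, PiLp.norm_single, Real.norm_eq_abs, sq_abs]
    at hsmooth
  simp only [conj_trivial] at hsmooth
  linarith

theorem sq_grad_div_le_fsel_insert_sub (hl : IsRSCSM l g M m r) (hM : 0 < M)
    {B : Finset (Fin n) → Euc n} (hBsupp : ∀ S, SuppIn S (B S))
    (hBmax : ∀ S x, SuppIn S x → l x ≤ l (B S)) {S : Finset (Fin n)} (hS : S.card < r)
    (a : Fin n) :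
    g (B S) a ^ 2 / (2 * M) ≤ fsel l B (insert a S) - fsel l B S := by
  have hstep := hl.add_single_ge (hBsupp S) hS a (g (B S) a / M)
  have hmax := hBmax _ _ ((hBsupp S).add_single a (g (B S) a / M))
  have hc : g (B S) a / M * g (B S) a - M / 2 * (g (B S) a / M) ^ 2
      = g (B S) a ^ 2 / (2 * M) := by
    field_simp
    ring
  simp only [fsel]
  linarith

end IsRSCSM

theorem Finset.mul_card_filter_le_sum {ι R : Type*} [Semiring R] [PartialOrder R]
    [IsOrderedRing R] (s : Finset ι) (v : ι → R) (hv : ∀ a ∈ s, 0 ≤ v a) (p : ι → Prop)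
    [DecidablePred p] (t : R) (hp : ∀ a ∈ s, p a → t ≤ v a) :
    t * (s.filter p).card ≤ ∑ a ∈ s, v a :=
  calc t * (s.filter p).card = (s.filter p).card • t := by
        rw [nsmul_eq_mul, Nat.cast_comm]
    _ ≤ ∑ a ∈ s.filter p, v a := Finset.card_nsmul_le_sum _ _ _ fun a ha =>
        (Finset.mem_filter.mp ha).elim fun has hpa => hp a has hpa
    _ ≤ ∑ a ∈ s, v a := Finset.sum_le_sum_of_subset_of_nonneg (Finset.filter_subset _ _)
        fun a ha _ => hv a ha

theorem stmt13_general {n k : ℕ} (l : Euc n → ℝ) (g : Euc n → Euc n) (M m : ℝ)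
    (hm : 0 < m) (hmM : m ≤ M)
    (hl : IsRSCSM l g M m (2 * k))
    (B : Finset (Fin n) → Euc n)
    (hBsupp : ∀ S, SuppIn S (B S))
    (hBmax : ∀ S x, SuppIn S x → l x ≤ l (B S))
    (S : Finset (Fin n)) (hS : S.card < k)
    (Y : Finset (Fin n))
    (t : ℝ) :
    (1 / (Y.card : ℝ)) * ∑ a ∈ Y, (fsel l B (insert a S) - fsel l B S)
      ≥ (t / (2 * M * (Y.card : ℝ))) *
          ((Y.filter fun s => t ≤ (g (B S) s) ^ 2).card : ℝ) := by
  have hM : 0 < M := hm.trans_le hmM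
  have hmarkov := Y.mul_card_filter_le_sum (fun a => g (B S) a ^ 2) (fun a _ => sq_nonneg _)
    (fun s => t ≤ g (B S) s ^ 2) t fun _ _ h => h
  have hsum : ∑ a ∈ Y, g (B S) a ^ 2 / (2 * M)
      ≤ ∑ a ∈ Y, (fsel l B (insert a S) - fsel l B S) :=
    Finset.sum_le_sum fun a _ => hl.sq_grad_div_le_fsel_insert_sub hM hBsupp hBmax (by omega) a
  rw [← Finset.sum_div] at hsum
  calc (t / (2 * M * (Y.card : ℝ))) * ((Y.filter fun s => t ≤ (g (B S) s) ^ 2).card : ℝ)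
      = 1 / (Y.card : ℝ) * ((t * (Y.filter fun s => t ≤ (g (B S) s) ^ 2).card) / (2 * M)) := by
        ring
    _ ≤ 1 / (Y.card : ℝ) * ∑ a ∈ Y, (fsel l B (insert a S) - fsel l B S) := by
        gcongr
        exact (div_le_div_of_nonneg_right hmarkov (by positivity)).trans hsum

theorem stmt13 {n k : ℕ} (l : Euc n → ℝ) (g : Euc n → Euc n) (M m : ℝ)
    (hm : 0 < m) (hmM : m ≤ M)
    (hgrad : ∀ x, HasGradientAt l (g x) x)
    (hl : IsRSCSM l g M m (2 * k))
    (B : Finset (Fin n) → Euc n)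
    (hB0 : B ∅ = 0)
    (hBsupp : ∀ S, SuppIn S (B S))
    (hBmax : ∀ S x, SuppIn S x → l x ≤ l (B S))
    (S : Finset (Fin n)) (hS : S.card < k)
    (Y : Finset (Fin n)) (hY : Y.Nonempty)
    (t : ℝ) (ht : 0 ≤ t) :
    (1 / (Y.card : ℝ)) * ∑ a ∈ Y, (fsel l B (insert a S) - fsel l B S)
      ≥ (t / (2 * M * (Y.card : ℝ))) *
          ((Y.filter fun s => t ≤ (g (B S) s) ^ 2).card : ℝ) :=
  stmt13_general l g M m hm hmM hl B hBsupp hBmax S hS Y t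
end
end
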